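/- arXiv:2212.08752 — 4 statements merged into one kernel-verified Lean document; each statement's English description precedes it below -/
import Mathlib

section
/- For every real number β, the integral over [0, π] of log((sin β · cos θ)² + (cos β · sin θ)²) dθ is at most -π·log 2. -/
/-!
Since `log` is concave, `log x ≤ 2x - 1 - log 2` for `x > 0` (its tangent line at `1/2`). The
integrand `f θ = (sin β cos θ)² + (cos β sin θ)²` is positive away from the zeros of `sin 2θ`, and
its mean over `[0, π]` is `(sin² β + cos² β) / 2 = 1/2`, so integrating the tangent bound gives
`∫ log f ≤ 2 · π/2 - π (1 + log 2) = -π log 2`. Integrability of `log ∘ f` holds because `f` is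
analytic, so its zeros are isolated and of finite order.
-/

open Real MeasureTheory

theorem Real.log_le_mul_sub_one_sub_log {c x : ℝ} (hc : 0 < c) (hx : 0 < x) :
    log x ≤ c * x - 1 - log c := by
  have := log_le_sub_one_of_pos (mul_pos hc hx)
  rw [log_mul hc.ne' hx.ne'] at this
  linarith

theorem intervalIntegral.integral_log_le_mul_integral_sub {f : ℝ → ℝ} {a b c : ℝ} (hab : a ≤ b)
    (hc : 0 < c) (hf : IntervalIntegrable f volume a b)
    (hlog : IntervalIntegrable (log ∘ f) volume a b) (hpos : ∀ᵐ x, 0 < f x) :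
    ∫ x in a..b, log (f x) ≤ c * (∫ x in a..b, f x) - (b - a) * (1 + log c) := by
  have htangent : IntervalIntegrable (fun x => c * f x - 1 - log c) volume a b :=
    ((hf.const_mul c).sub intervalIntegrable_const).sub intervalIntegrable_const
  calc ∫ x in a..b, log (f x) ≤ ∫ x in a..b, (c * f x - 1 - log c) :=
        integral_mono_ae hab hlog htangent
          (hpos.mono fun x hx => log_le_mul_sub_one_sub_log hc hx)
    _ = c * (∫ x in a..b, f x) - (b - a) * (1 + log c) := by
      rw [integral_sub ((hf.const_mul c).sub intervalIntegrable_const) intervalIntegrable_const,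
        integral_sub (hf.const_mul c) intervalIntegrable_const, integral_const_mul]
      simp only [integral_const, smul_eq_mul]
      ring

theorem ae_sin_mul_cos_sq_add_cos_mul_sin_sq_pos (β : ℝ) :
    ∀ᵐ θ, 0 < (sin β * cos θ) ^ 2 + (cos β * sin θ) ^ 2 := by
  refine ae_iff.mpr (((Set.countable_range fun n : ℤ => n * π / 2).mono ?_).measure_zero _)
  intro θ hθ
  have hzero : (sin β * cos θ) ^ 2 + (cos β * sin θ) ^ 2 = 0 :=
    le_antisymm (not_lt.mp hθ) (by positivity)
  have hsin : sin β * cos θ = 0 := by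
    nlinarith [sq_nonneg (sin β * cos θ), sq_nonneg (cos β * sin θ)]
  have hcos : cos β * sin θ = 0 := by
    nlinarith [sq_nonneg (sin β * cos θ), sq_nonneg (cos β * sin θ)]
  have hsin_two_mul : sin (2 * θ) = 0 := by
    rw [sin_two_mul]
    linear_combination (-2 * sin θ * cos θ) * sin_sq_add_cos_sq β + (2 * sin β * sin θ) * hsin
      + (2 * cos β * cos θ) * hcos
  obtain ⟨n, hn⟩ := sin_eq_zero_iff.mp hsin_two_mul
  exact ⟨n, by linarith⟩

theorem integral_sin_mul_cos_sq_add_cos_mul_sin_sq (β : ℝ) :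
    ∫ θ in (0:ℝ)..π, ((sin β * cos θ) ^ 2 + (cos β * sin θ) ^ 2) = π / 2 := by
  simp_rw [mul_pow]
  rw [intervalIntegral.integral_add ((by fun_prop : Continuous _).intervalIntegrable _ _)
      ((by fun_prop : Continuous _).intervalIntegrable _ _),
    intervalIntegral.integral_const_mul, intervalIntegral.integral_const_mul, integral_cos_sq,
    integral_sin_sq]
  simp only [sin_zero, cos_zero, sin_pi, cos_pi, mul_zero, zero_mul, sub_zero, zero_add]
  linear_combination π / 2 * sin_sq_add_cos_sq β

theorem integral_log_le (β : ℝ) :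
    ∫ θ in (0:ℝ)..π,
        Real.log ((Real.sin β * Real.cos θ)^2 + (Real.cos β * Real.sin θ)^2)
      ≤ -π * Real.log 2 := by
  have hanalytic : AnalyticOnNhd ℝ (fun θ => (sin β * cos θ) ^ 2 + (cos β * sin θ) ^ 2)
      (Set.uIcc 0 π) := fun θ _ => by fun_prop
  have h := intervalIntegral.integral_log_le_mul_integral_sub pi_pos.le two_pos
    ((by fun_prop : Continuous _).intervalIntegrable _ _)
    hanalytic.meromorphicOn.intervalIntegrable_log (ae_sin_mul_cos_sq_add_cos_mul_sin_sq_pos β)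
  rw [integral_sin_mul_cos_sq_add_cos_mul_sin_sq] at h
  linarith
end

section
/- If β is real and the integral over [0, π] of log((sin β · cos θ)² + (cos β · sin θ)²) dθ equals -π·log 2, then sin²β = cos²β, i.e., β = π/4 + (π/2)·k for some integer k. -/
/-!
Write `g β θ = (sin β cos θ)² + (cos β sin θ)²`. Then `g β` has period `π`,
`g β θ + g β (θ + π/2) = 1` and `g β θ - g β (θ + π/2) = -cos 2β cos 2θ`. By strict concavity
of `log`, `log (g β θ) + log (g β (θ + π/2)) < -2 log 2` whenever the two values differ, which
for `cos 2β ≠ 0` happens for almost every `θ`. Integrating over a period and using the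
periodicity to identify the integrals of both terms gives `2 ∫₀^π log (g β θ) dθ < -2π log 2`.
-/

open Real MeasureTheory Set Function intervalIntegral

lemma log_add_log_lt_of_add_eq_one {x y : ℝ} (hx : 0 < x) (hy : 0 < y) (hxy : x + y = 1)
    (hne : x ≠ y) : log x + log y < -2 * log 2 := by
  have := strictConcaveOn_log_Ioi.2 (mem_Ioi.2 hx) (mem_Ioi.2 hy) hne
    (by norm_num : (0 : ℝ) < 1 / 2) (by norm_num : (0 : ℝ) < 1 / 2) (by norm_num)
  rw [show (1 / 2 : ℝ) • x + (1 / 2 : ℝ) • y = 2⁻¹ by simp only [smul_eq_mul]; linarith,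
    log_inv] at this
  simp only [smul_eq_mul] at this
  linarith

lemma ae_sin_mul_ne_zero {c : ℝ} (hc : c ≠ 0) : ∀ᵐ x : ℝ, sin (c * x) ≠ 0 := by
  refine measure_mono_null (fun x hx => ?_)
    ((countable_range fun n : ℤ => n * π / c).measure_zero _)
  obtain ⟨n, hn⟩ := sin_eq_zero_iff.1 (not_not.1 hx)
  exact ⟨n, by field_simp; linarith⟩

lemma sin_four_mul (x : ℝ) : sin (4 * x) = 4 * sin x * cos x * cos (2 * x) := by
  rw [show 4 * x = 2 * (2 * x) by ring, sin_two_mul, sin_two_mul]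
  ring

lemma intervalIntegral.integral_lt_integral_of_ae_lt {f g : ℝ → ℝ} {a b : ℝ} (hab : a < b)
    (hfi : IntervalIntegrable f volume a b) (hgi : IntervalIntegrable g volume a b)
    (hlt : ∀ᵐ x, f x < g x) : ∫ x in a..b, f x < ∫ x in a..b, g x := by
  refine integral_lt_integral_of_ae_le_of_measure_setOfPred_lt_ne_zero hab.le hfi hgi
    (ae_restrict_of_ae (hlt.mono fun _ => le_of_lt)) ?_
  rw [Measure.restrict_apply' measurableSet_Ioc, inter_comm,
    measure_inter_conull (by rw [compl_ofPred]; exact ae_iff.1 hlt)]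
  simp [hab]

noncomputable def ellipseNormSq (β θ : ℝ) : ℝ := (sin β * cos θ) ^ 2 + (cos β * sin θ) ^ 2

namespace ellipseNormSq

lemma add_pi (β θ : ℝ) : ellipseNormSq β (θ + π) = ellipseNormSq β θ := by
  simp only [ellipseNormSq, sin_add_pi, cos_add_pi]
  ring

lemma add_add_pi_div_two (β θ : ℝ) :
    ellipseNormSq β θ + ellipseNormSq β (θ + π / 2) = 1 := by
  simp only [ellipseNormSq, sin_add_pi_div_two, cos_add_pi_div_two]
  linear_combination (sin β ^ 2 + cos β ^ 2) * sin_sq_add_cos_sq θ + sin_sq_add_cos_sq β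

lemma sub_add_pi_div_two (β θ : ℝ) :
    ellipseNormSq β θ - ellipseNormSq β (θ + π / 2) = -(cos (2 * β) * cos (2 * θ)) := by
  simp only [ellipseNormSq, sin_add_pi_div_two, cos_add_pi_div_two, cos_two_mul']
  ring

lemma pos {β θ : ℝ} (hsin : sin θ ≠ 0) (hcos : cos θ ≠ 0) : 0 < ellipseNormSq β θ := by
  rcases eq_or_ne (sin β) 0 with hβ | hβ
  · have : cos β ^ 2 = 1 := by nlinarith [sin_sq_add_cos_sq β]
    simp only [ellipseNormSq, hβ, zero_mul, mul_pow, this, one_mul]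
    positivity
  · exact add_pos_of_pos_of_nonneg (sq_pos_of_ne_zero (mul_ne_zero hβ hcos)) (sq_nonneg _)

lemma log_add_log_add_pi_div_two_lt {β θ : ℝ} (hβ : cos (2 * β) ≠ 0) (hθ : sin (4 * θ) ≠ 0) :
    log (ellipseNormSq β θ) + log (ellipseNormSq β (θ + π / 2)) < -2 * log 2 := by
  obtain ⟨⟨⟨-, hsin⟩, hcos⟩, hcos2⟩ := by simpa only [sin_four_mul, mul_ne_zero_iff] using hθ
  refine log_add_log_lt_of_add_eq_one (pos hsin hcos) (pos ?_ ?_) (add_add_pi_div_two β θ) ?_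
  · rwa [sin_add_pi_div_two]
  · rwa [cos_add_pi_div_two, neg_ne_zero]
  · rw [← sub_ne_zero, sub_add_pi_div_two]
    exact neg_ne_zero.2 (mul_ne_zero hβ hcos2)

lemma cos_two_mul_eq_zero_of_integral_log {β : ℝ}
    (h : ∫ θ in (0 : ℝ)..π, log (ellipseNormSq β θ) = -π * log 2) : cos (2 * β) = 0 := by
  by_contra hβ
  set F := fun θ => log (ellipseNormSq β θ)
  have hper : Periodic F π := fun θ => by simp only [F, add_pi]
  have hint : ∀ a b, IntervalIntegrable F volume a b := by
    refine hper.intervalIntegrable₀ pi_ne_zero (not_not.1 fun hF => ?_)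
    rw [integral_undef hF] at h
    nlinarith [mul_pos pi_pos (log_pos one_lt_two)]
  have hint' : IntervalIntegrable (fun θ => F (θ + π / 2)) volume 0 π := by
    simpa using (hint (π / 2) (π + π / 2)).comp_add_right (π / 2)
  have hshift : ∫ θ in (0 : ℝ)..π, F (θ + π / 2) = -π * log 2 := by
    rw [integral_comp_add_right, zero_add, add_comm π, hper.intervalIntegral_add_eq (π / 2) 0,
      zero_add, h]
  have hlt := integral_lt_integral_of_ae_lt pi_pos ((hint 0 π).add hint')
    (intervalIntegrable_const (c := -2 * log 2))
    ((ae_sin_mul_ne_zero four_ne_zero).mono fun θ => log_add_log_add_pi_div_two_lt hβ)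
  rw [integral_add (hint 0 π) hint', h, hshift, intervalIntegral.integral_const,
    smul_eq_mul] at hlt
  linarith

end ellipseNormSq

theorem integral_log_eq_iff (β : ℝ)
    (h : ∫ θ in (0:ℝ)..π,
        Real.log ((Real.sin β * Real.cos θ)^2 + (Real.cos β * Real.sin θ)^2)
      = -π * Real.log 2) :
    (Real.sin β)^2 = (Real.cos β)^2 ∧ ∃ k : ℤ, β = π/4 + (π/2) * k := by
  have hβ : cos (2 * β) = 0 := ellipseNormSq.cos_two_mul_eq_zero_of_integral_log h
  obtain ⟨k, hk⟩ := cos_eq_zero_iff.1 hβ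
  refine ⟨?_, k, by linarith⟩
  rw [cos_two_mul'] at hβ
  linarith
end

section
/- For any complex numbers γ, δ with |γ|² + |δ|² = 1, the integral over [0, π] of log(|δ·cos θ − γ·sin θ|⁻²) dθ is at least π·log 2. -/
/-!
Put `g θ = δ cos θ - γ sin θ`. The tangent line of `-log` at `1/2` gives
`log (‖g θ‖²)⁻¹ ≥ log 2 + 1 - 2 ‖g θ‖²` wherever `g θ ≠ 0`, and integrating over `[0, π]`, where
`∫ ‖g‖² = π/2 (‖γ‖² + ‖δ‖²) = π/2`, gives `π log 2`. The comparison is legitimate because `g` is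
real-analytic and not identically zero: its zeros are discrete, hence null, and `log ‖g‖` is
integrable.
-/

open Real Set Filter MeasureTheory ComplexConjugate

theorem Real.add_one_sub_mul_le_log_inv {c x : ℝ} (hc : 0 < c) (hx : 0 < x) :
    log c + 1 - c * x ≤ log x⁻¹ := by
  have := log_le_sub_one_of_pos (mul_pos hc hx)
  rw [log_mul hc.ne' hx.ne'] at this
  rw [log_inv]
  linarith

theorem AnalyticOnNhd.ae_ne_zero {E : Type*} [NormedAddCommGroup E] [NormedSpace ℝ E]
    {f : ℝ → E} (hf : AnalyticOnNhd ℝ f univ) (h : ∃ x, f x ≠ 0) : ∀ᵐ x, f x ≠ 0 := by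
  obtain ⟨x, hx⟩ := h
  have hcodiscrete :=
    (hf.eqOn_zero_or_eventually_ne_zero_of_preconnected isPreconnected_univ).resolve_left
      fun hzero => hx (hzero (mem_univ x))
  rw [← Measure.restrict_univ (μ := volume)]
  exact ae_restrict_le_codiscreteWithin MeasurableSet.univ hcodiscrete

theorem analyticOnNhd_cos_sub_sin (γ δ : ℂ) :
    AnalyticOnNhd ℝ (fun θ : ℝ => δ * cos θ - γ * sin θ) univ := fun _ _ =>
  (analyticAt_const.mul ((Complex.ofRealCLM.analyticAt _).comp analyticAt_cos)).sub
    (analyticAt_const.mul ((Complex.ofRealCLM.analyticAt _).comp analyticAt_sin))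

theorem norm_cos_sub_sin_sq (γ δ : ℂ) (θ : ℝ) :
    ‖δ * cos θ - γ * sin θ‖ ^ 2 =
      ‖δ‖ ^ 2 * cos θ ^ 2 + ‖γ‖ ^ 2 * sin θ ^ 2 - 2 * (δ * conj γ).re * (sin θ * cos θ) := by
  simp only [Complex.sq_norm, Complex.normSq_apply, Complex.sub_re, Complex.sub_im,
    Complex.mul_re, Complex.mul_im, Complex.ofReal_re, Complex.ofReal_im, Complex.conj_re,
    Complex.conj_im]
  ring

theorem integral_norm_cos_sub_sin_sq (γ δ : ℂ) :
    ∫ θ in (0:ℝ)..π, ‖δ * cos θ - γ * sin θ‖ ^ 2 = π / 2 * (‖γ‖ ^ 2 + ‖δ‖ ^ 2) := by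
  simp_rw [norm_cos_sub_sin_sq]
  rw [intervalIntegral.integral_sub, intervalIntegral.integral_add,
    intervalIntegral.integral_const_mul, intervalIntegral.integral_const_mul,
    intervalIntegral.integral_const_mul, integral_cos_sq, integral_sin_sq, integral_sin_mul_cos₁]
  · simp only [cos_pi, sin_pi, cos_zero, sin_zero]
    ring
  all_goals exact Continuous.intervalIntegrable (by fun_prop) _ _

theorem integral_log_inv_sq_ge (γ δ : ℂ)
    (h : ‖γ‖ ^ 2 + ‖δ‖ ^ 2 = 1) :
    π * Real.log 2 ≤
      ∫ θ in (0:ℝ)..π,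
        Real.log ((‖δ * Real.cos θ - γ * Real.sin θ‖ ^ 2)⁻¹) := by
  set g : ℝ → ℂ := fun θ => δ * cos θ - γ * sin θ
  have hg : AnalyticOnNhd ℝ g univ := analyticOnNhd_cos_sub_sin γ δ
  have hg_ne : ∃ θ, g θ ≠ 0 := by
    by_contra! hzero
    have hδ : δ = 0 := by simpa [g] using hzero 0
    have hγ : γ = 0 := by simpa [g] using hzero (π / 2)
    simp [hγ, hδ] at h
  have hlog_int : IntervalIntegrable (fun θ => log ((‖g θ‖ ^ 2)⁻¹)) volume 0 π := by
    simp only [log_inv, log_pow]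
    exact ((hg.mono (subset_univ _)).meromorphicOn.intervalIntegrable_log_norm.const_mul _).neg
  have hsq_int : IntervalIntegrable (fun θ => log 2 + 1 - 2 * ‖g θ‖ ^ 2) volume 0 π :=
    Continuous.intervalIntegrable (by fun_prop) _ _
  calc π * log 2 = ∫ θ in (0:ℝ)..π, (log 2 + 1 - 2 * ‖g θ‖ ^ 2) := by
        rw [intervalIntegral.integral_sub intervalIntegrable_const
          (Continuous.intervalIntegrable (by fun_prop) _ _), intervalIntegral.integral_const_mul,
          integral_norm_cos_sub_sin_sq, h]
        simp only [intervalIntegral.integral_const, sub_zero, smul_eq_mul]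
        ring
    _ ≤ ∫ θ in (0:ℝ)..π, log ((‖g θ‖ ^ 2)⁻¹) :=
        intervalIntegral.integral_mono_ae pi_pos.le hsq_int hlog_int <|
          (hg.ae_ne_zero hg_ne).mono fun θ hθ =>
            add_one_sub_mul_le_log_inv two_pos (by positivity)
end

section
/- Let F(x,y) = ∏_{k=0}^{n−1} (δ_k x − γ_k y) be a binary form of degree n ≥ 1 with complex coefficients, all of whose roots are non-real (i.e., no root lies on ℝP¹). Then h_F^{2/n} · A_F ≥ 2π, where h_F = ∏_k √(|γ_k|² + |δ_k|²) and A_F = (1/2)∫_0^{2π} |F(cos θ, sin θ)|^{−2/n} dθ. -/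
open Real MeasureTheory

/-!
Normalize the factors of `F`: `q_k(θ) = |δ_k cos θ - γ_k sin θ|² / (|γ_k|² + |δ_k|²)`
integrates to `π` over a period, hence so does their mean `f`. By AM-GM,
`|F(cos θ, sin θ)|^{2/n} ≤ h_F^{2/n} f(θ)`, and by Cauchy-Schwarz `∫ 1/f ≥ (2π)² / ∫ f = 4π`,
so `h_F^{2/n} A_F ≥ ½ ∫ 1/f ≥ 2π`. Since no root of `F` is real, `F` and `f` do not vanish
on the circle.
-/

open ComplexConjugate Finset

lemma Real.geom_mean_le_geom_mean_mul_arith_mean_div {ι : Type*} {s : Finset ι}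
    (hs : s.Nonempty) {a w : ι → ℝ} (ha : ∀ i ∈ s, 0 ≤ a i) (hw : ∀ i ∈ s, 0 < w i) :
    (∏ i ∈ s, a i) ^ (#s : ℝ)⁻¹
      ≤ (∏ i ∈ s, w i) ^ (#s : ℝ)⁻¹ * ((∑ i ∈ s, a i / w i) / #s) := by
  have hz : ∀ i ∈ s, 0 ≤ a i / w i := fun i hi => div_nonneg (ha i hi) (hw i hi).le
  have hprod : ∏ i ∈ s, a i = (∏ i ∈ s, w i) * ∏ i ∈ s, a i / w i := by
    rw [← prod_mul_distrib]
    exact prod_congr rfl fun i hi => (mul_div_cancel₀ _ (hw i hi).ne').symm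
  rw [hprod, mul_rpow (prod_nonneg fun i hi => (hw i hi).le) (prod_nonneg hz)]
  refine mul_le_mul_of_nonneg_left ?_ (rpow_nonneg (prod_nonneg fun i hi => (hw i hi).le) _)
  simpa only [rpow_one, one_mul, sum_const, nsmul_eq_mul, mul_one] using
    geom_mean_le_arith_mean s (fun _ => 1) (fun i => a i / w i) (fun _ _ => zero_le_one)
      (by simpa using hs) hz

lemma MeasureTheory.ofReal_integral_le_lintegral_ofReal {α : Type*} [MeasurableSpace α]
    {μ : Measure α} {f : α → ℝ} (hf : Integrable f μ) :
    ENNReal.ofReal (∫ x, f x ∂μ) ≤ ∫⁻ x, ENNReal.ofReal (f x) ∂μ := by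
  rw [integral_eq_lintegral_pos_part_sub_lintegral_neg_part hf]
  exact ENNReal.ofReal_le_of_le_toReal (sub_le_self _ ENNReal.toReal_nonneg)

lemma MeasureTheory.ofReal_sq_measureReal_div_integral_le_lintegral_inv {α : Type*}
    [MeasurableSpace α] {μ : Measure α} [IsFiniteMeasure μ] {g : α → ℝ} (hg : Integrable g μ)
    (hpos : ∀ᵐ x ∂μ, 0 < g x) :
    ENNReal.ofReal (μ.real Set.univ ^ 2 / ∫ x, g x ∂μ) ≤ ∫⁻ x, ENNReal.ofReal (g x)⁻¹ ∂μ := by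
  set m := μ.real Set.univ
  set I := ∫ x, g x ∂μ
  rcases (integral_nonneg_of_ae (hpos.mono fun _ hx => hx.le)).eq_or_lt with hI | hI
  · simp [I, ← hI]
  have hI0 : I ≠ 0 := hI.ne'
  -- the tangent line of `y ↦ 1 / y` at `y = I / m` lies below its graph
  have tangent : ∀ y > 0, 2 * m / I - m ^ 2 / I ^ 2 * y ≤ y⁻¹ := fun y hy => by
    rw [← sub_nonneg, show y⁻¹ - (2 * m / I - m ^ 2 / I ^ 2 * y) = (I - m * y) ^ 2 / (I ^ 2 * y) by
      field_simp; ring]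
    positivity
  calc ENNReal.ofReal (m ^ 2 / I)
        = ENNReal.ofReal (∫ x, (2 * m / I - m ^ 2 / I ^ 2 * g x) ∂μ) := by
        rw [integral_sub (integrable_const _) (hg.const_mul _), integral_const, integral_const_mul]
        congr 1
        simp only [smul_eq_mul]
        field_simp
        ring
    _ ≤ ∫⁻ x, ENNReal.ofReal (2 * m / I - m ^ 2 / I ^ 2 * g x) ∂μ :=
        ofReal_integral_le_lintegral_ofReal ((integrable_const _).sub (hg.const_mul _))
    _ ≤ ∫⁻ x, ENNReal.ofReal (g x)⁻¹ ∂μ :=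
        lintegral_mono_ae (hpos.mono fun x hx => ENNReal.ofReal_le_ofReal (tangent _ hx))

section LinearForm

variable (γ δ : ℂ)

lemma norm_sq_cos_sub_sin (θ : ℝ) :
    ‖δ * cos θ - γ * sin θ‖ ^ 2
      = ‖δ‖ ^ 2 * cos θ ^ 2 + ‖γ‖ ^ 2 * sin θ ^ 2 - 2 * (δ * conj γ).re * (sin θ * cos θ) := by
  simp only [Complex.sq_norm, Complex.normSq_apply, Complex.sub_re, Complex.sub_im,
    Complex.mul_re, Complex.mul_im, Complex.ofReal_re, Complex.ofReal_im, Complex.conj_re,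
    Complex.conj_im]
  ring

variable {γ δ} in
lemma norm_cos_sub_sin_pos (h : (δ * conj γ).im ≠ 0) (θ : ℝ) :
    0 < ‖δ * cos θ - γ * sin θ‖ := by
  refine norm_pos_iff.2 fun hz => h ?_
  have hc : cos θ * (δ * conj γ).im = ((δ * cos θ - γ * sin θ) * conj γ).im := by
    simp only [Complex.mul_im, Complex.sub_re, Complex.sub_im, Complex.mul_re,
      Complex.ofReal_re, Complex.ofReal_im, Complex.conj_re, Complex.conj_im]
    ring
  have hs : sin θ * (δ * conj γ).im = ((δ * cos θ - γ * sin θ) * conj δ).im := by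
    simp only [Complex.mul_im, Complex.sub_re, Complex.sub_im, Complex.mul_re,
      Complex.ofReal_re, Complex.ofReal_im, Complex.conj_re, Complex.conj_im]
    ring
  rw [hz, zero_mul, Complex.zero_im] at hc hs
  linear_combination sin θ * hs + cos θ * hc - (δ * conj γ).im * sin_sq_add_cos_sq θ

lemma integral_norm_sq_cos_sub_sin :
    ∫ θ in Set.Ioc 0 (2 * π), ‖δ * cos θ - γ * sin θ‖ ^ 2 = π * (‖γ‖ ^ 2 + ‖δ‖ ^ 2) := by
  rw [← intervalIntegral.integral_of_le two_pi_pos.le]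
  simp_rw [norm_sq_cos_sub_sin]
  have hcos : ∫ θ in (0)..(2 * π), cos θ ^ 2 = π := by simp [integral_cos_sq]
  have hsin : ∫ θ in (0)..(2 * π), sin θ ^ 2 = π := by simp [integral_sin_sq]
  have hsc : ∫ θ in (0)..(2 * π), sin θ * cos θ = 0 := by simp [integral_sin_mul_cos₁]
  rw [intervalIntegral.integral_sub, intervalIntegral.integral_add,
    intervalIntegral.integral_const_mul, intervalIntegral.integral_const_mul,
    intervalIntegral.integral_const_mul, hcos, hsin, hsc]
  · ring
  all_goals exact (by fun_prop : Continuous _).intervalIntegrable _ _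

end LinearForm

lemma norm_sq_add_norm_sq_pos_of_im_mul_conj_ne_zero {γ δ : ℂ} (h : (δ * conj γ).im ≠ 0) :
    0 < ‖γ‖ ^ 2 + ‖δ‖ ^ 2 := by
  refine (add_nonneg (sq_nonneg _) (sq_nonneg _)).lt_of_ne fun h0 => h ?_
  rw [eq_comm, add_eq_zero_iff_of_nonneg (sq_nonneg _) (sq_nonneg _)] at h0
  simp [norm_eq_zero.1 (pow_eq_zero_iff two_ne_zero |>.1 h0.1)]

section Family

variable {ι : Type*} [Fintype ι] (γ δ : ι → ℂ)

noncomputable def normalizedFactorMean (θ : ℝ) : ℝ :=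
  (∑ k, ‖δ k * cos θ - γ k * sin θ‖ ^ 2 / (‖γ k‖ ^ 2 + ‖δ k‖ ^ 2)) / Fintype.card ι

lemma continuous_normalizedFactorMean : Continuous (normalizedFactorMean γ δ) := by
  unfold normalizedFactorMean
  fun_prop

variable {γ δ}

lemma normalizedFactorMean_pos [Nonempty ι] (h : ∀ k, (δ k * conj (γ k)).im ≠ 0) (θ : ℝ) :
    0 < normalizedFactorMean γ δ θ := by
  refine div_pos (sum_pos (fun k _ => div_pos ?_ ?_) univ_nonempty)
    (Nat.cast_pos.2 Fintype.card_pos)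
  · exact pow_pos (norm_cos_sub_sin_pos (h k) θ) 2
  · exact norm_sq_add_norm_sq_pos_of_im_mul_conj_ne_zero (h k)

lemma integral_normalizedFactorMean [Nonempty ι] (hH : ∀ k, ‖γ k‖ ^ 2 + ‖δ k‖ ^ 2 ≠ 0) :
    ∫ θ in Set.Ioc 0 (2 * π), normalizedFactorMean γ δ θ = π := by
  unfold normalizedFactorMean
  rw [integral_div, integral_finsetSum]
  · simp_rw [integral_div, integral_norm_sq_cos_sub_sin, mul_div_cancel_right₀ _ (hH _), sum_const,
      card_univ, nsmul_eq_mul]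
    field_simp
  · exact fun k _ => (by fun_prop : Continuous _).integrableOn_Ioc

lemma norm_prod_rpow_le_mul_normalizedFactorMean [Nonempty ι]
    (hH : ∀ k, 0 < ‖γ k‖ ^ 2 + ‖δ k‖ ^ 2) (θ : ℝ) :
    ‖∏ k, (δ k * cos θ - γ k * sin θ)‖ ^ ((2 : ℝ) / Fintype.card ι)
      ≤ (∏ k, √(‖γ k‖ ^ 2 + ‖δ k‖ ^ 2)) ^ ((2 : ℝ) / Fintype.card ι)
        * normalizedFactorMean γ δ θ := by
  have two_div : ∀ x : ℝ, 0 ≤ x →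
      x ^ ((2 : ℝ) / Fintype.card ι) = (x ^ 2) ^ (Fintype.card ι : ℝ)⁻¹ := fun x hx => by
    rw [← rpow_natCast, ← rpow_mul hx, div_eq_mul_inv, Nat.cast_ofNat]
  rw [two_div _ (norm_nonneg _), two_div _ (by positivity), norm_prod, ← prod_pow, ← prod_pow]
  simp_rw [sq_sqrt (hH _).le]
  exact geom_mean_le_geom_mean_mul_arith_mean_div univ_nonempty
    (fun k _ => sq_nonneg ‖δ k * cos θ - γ k * sin θ‖) (fun k _ => hH k)

end Family

theorem lower_bound_no_real_roots_general (n : ℕ) (hn : 1 ≤ n) (γ δ : Fin n → ℂ)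
    (hnoreal : ∀ k, (δ k * (starRingEnd ℂ) (γ k)).im ≠ 0) :
    ENNReal.ofReal
        ((∏ k, Real.sqrt (‖γ k‖ ^ 2 + ‖δ k‖ ^ 2))
          ^ ((2 : ℝ) / n)) *
      ((1 / 2) * ∫⁻ θ in Set.Ioc (0 : ℝ) (2 * π),
        ENNReal.ofReal
          (‖∏ k, (δ k * Real.cos θ - γ k * Real.sin θ)‖
            ^ (-(2 / (n : ℝ)))))
    ≥ ENNReal.ofReal (2 * π) := by
  have : Nonempty (Fin n) := ⟨⟨0, hn⟩⟩
  have hH k := norm_sq_add_norm_sq_pos_of_im_mul_conj_ne_zero (hnoreal k)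
  set f := normalizedFactorMean γ δ
  set c := (∏ k, √(‖γ k‖ ^ 2 + ‖δ k‖ ^ 2)) ^ ((2 : ℝ) / n)
  have hc : 0 < c := rpow_pos_of_pos (prod_pos fun k _ => sqrt_pos.2 (hH k)) _
  have hpoint θ : c⁻¹ * (f θ)⁻¹ ≤ ‖∏ k, (δ k * cos θ - γ k * sin θ)‖ ^ (-(2 / (n : ℝ))) := by
    have hF : 0 < ‖∏ k, (δ k * cos θ - γ k * sin θ)‖ := by
      simpa only [norm_prod] using prod_pos fun k _ => norm_cos_sub_sin_pos (hnoreal k) θ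
    rw [rpow_neg hF.le, ← mul_inv]
    exact inv_anti₀ (by positivity) (by
      simpa using norm_prod_rpow_le_mul_normalizedFactorMean hH θ)
  have hintegral_inv : ENNReal.ofReal (4 * π) ≤ ∫⁻ θ in Set.Ioc 0 (2 * π), ENNReal.ofReal (f θ)⁻¹ := by
    have := ofReal_sq_measureReal_div_integral_le_lintegral_inv
      (μ := volume.restrict (Set.Ioc 0 (2 * π)))
      (continuous_normalizedFactorMean γ δ).integrableOn_Ioc
      (ae_of_all _ (normalizedFactorMean_pos hnoreal))
    rwa [measureReal_restrict_apply_univ, volume_real_Ioc_of_le two_pi_pos.le,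
      integral_normalizedFactorMean fun k => (hH k).ne', sub_zero,
      show (2 * π) ^ 2 / π = 4 * π by field_simp; ring] at this
  calc ENNReal.ofReal (2 * π)
        = ENNReal.ofReal c * (1 / 2 * (ENNReal.ofReal c⁻¹ * ENNReal.ofReal (4 * π))) := by
        rw [show (1 / 2 : ENNReal) = ENNReal.ofReal (1 / 2) by
            rw [ENNReal.ofReal_div_of_pos two_pos, ENNReal.ofReal_one, ENNReal.ofReal_ofNat],
          ← ENNReal.ofReal_mul (inv_nonneg.2 hc.le), ← ENNReal.ofReal_mul (by norm_num),
          ← ENNReal.ofReal_mul hc.le]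
        congr 1
        field_simp
        ring
    _ ≤ ENNReal.ofReal c *
          (1 / 2 * ∫⁻ θ in Set.Ioc 0 (2 * π), ENNReal.ofReal (c⁻¹ * (f θ)⁻¹)) := by
        simp_rw [ENNReal.ofReal_mul (inv_nonneg.2 hc.le)]
        rw [lintegral_const_mul' _ _ ENNReal.ofReal_ne_top]
        gcongr
    _ ≤ _ := by
        gcongr with θ
        exact hpoint θ

theorem lower_bound_no_real_roots (n : ℕ) (hn : 1 ≤ n) (γ δ : Fin n → ℂ)
    (hnz : ∀ k, γ k ≠ 0 ∨ δ k ≠ 0)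
    (hnoreal : ∀ k, (δ k * (starRingEnd ℂ) (γ k)).im ≠ 0) :
    ENNReal.ofReal
        ((∏ k, Real.sqrt (‖γ k‖ ^ 2 + ‖δ k‖ ^ 2))
          ^ ((2 : ℝ) / n)) *
      ((1 / 2) * ∫⁻ θ in Set.Ioc (0 : ℝ) (2 * π),
        ENNReal.ofReal
          (‖∏ k, (δ k * Real.cos θ - γ k * Real.sin θ)‖
            ^ (-(2 / (n : ℝ)))))
    ≥ ENNReal.ofReal (2 * π) :=
  lower_bound_no_real_roots_general n hn γ δ hnoreal
end
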